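/- arXiv:2401.17090 — 2 statements merged into one kernel-verified Lean document; each statement's English description precedes it below -/
import Mathlib

section
/- If f₀ ∈ L²[0,1] is not constant (almost everywhere) and MCA(f₀) = 1/2, then E[A(f₀), f₀] > 0, where A is the constrained selection gradient; equivalently ‖x−1/2‖²·‖∇E(f₀)‖² > ⟨x − 1/2, ∇E(f₀)⟩² (strict Cauchy–Schwarz), since ∇E(f₀) is not a scalar multiple of 1/2 − x unless f₀ is constant. -/
/-!
Write `g = ∇E(f₀)` and `u = x - 1/2`, so `‖u‖² = 1/12`. Since `MCA(f₀) = 1/2` the constraint is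
active and `A(f₀) = g - 12⟨u, g⟩ u`, whence `E[A(f₀), f₀] = ‖g‖² - 12⟨u, g⟩² = ‖g‖² - ⟨u, g⟩² / ‖u‖²`:
both claims are the strict Cauchy–Schwarz inequality for `u` and `g`. As `g = 2∫₀ˣ f₀ - ∫₀¹ f₀` is
continuous, equality would force `g = k u` on `[0, 1]`, i.e. `∫₀ˣ f₀ = k x / 2`, and then the
Lebesgue differentiation theorem gives `f₀ = k / 2` almost everywhere.
-/

open MeasureTheory intervalIntegral ENNReal

/-- The selection gradient `∇E(f)(x) = ∫₀ˣ f − ∫ₓ¹ f`. -/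
noncomputable def gradE (f : ℝ → ℝ) (x : ℝ) : ℝ :=
  (∫ y in (0:ℝ)..x, f y) - ∫ y in x..(1:ℝ), f y

/-- The Heaviside function: `1` for `t ≥ 0`, `0` for `t < 0`. -/
noncomputable def heav (t : ℝ) : ℝ := if 0 ≤ t then 1 else 0

/-- The MCA-constraint functional `w(f) = ∫₀¹ (x − 1/2) f(x) dx`. -/
noncomputable def wfun (f : ℝ → ℝ) : ℝ := ∫ x in (0:ℝ)..1, (x - 1/2) * f x

/-- The mean competitive ability. -/
noncomputable def mca (f : ℝ → ℝ) : ℝ :=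
  (∫ x in (0:ℝ)..1, x * f x) / (∫ x in (0:ℝ)..1, f x)

/-- The constrained selection gradient `A`. -/
noncomputable def Aop (f : ℝ → ℝ) (x : ℝ) : ℝ :=
  gradE f x - 12 * heav (wfun f) * (x - 1/2) *
    ∫ y in (0:ℝ)..1, (y - 1/2) * gradE f y

/-- The payoff of the function-valued team game. -/
noncomputable def payoff (f g : ℝ → ℝ) : ℝ :=
  ∫ x in (0:ℝ)..1, f x * gradE g x

open Set Filter

theorem ae_eq_const_of_integral_eq_mul_sub {f : ℝ → ℝ} {a b C : ℝ}
    (hf : IntervalIntegrable f volume a b)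
    (h : ∀ x ∈ Icc a b, ∫ t in a..x, f t = C * (x - a)) :
    f =ᵐ[volume.restrict (Icc a b)] fun _ => C := by
  rw [← Measure.restrict_congr_set Ioo_ae_eq_Icc, EventuallyEq,
    ae_restrict_iff' measurableSet_Ioo]
  filter_upwards [hf.ae_hasDerivAt_integral] with x hderiv hx
  have hab : a ≤ b := (hx.1.trans hx.2).le
  have hprimitive := hderiv (by simpa [uIcc_of_le hab] using Ioo_subset_Icc_self hx) a
    left_mem_uIcc
  have hlinear : HasDerivAt (fun y => ∫ t in a..y, f t) C x := by
    refine (by simpa using ((hasDerivAt_id x).sub_const a).const_mul C :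
      HasDerivAt (fun y => C * (y - a)) C x).congr_of_eventuallyEq ?_
    filter_upwards [Ioo_mem_nhds hx.1 hx.2] with y hy
    simpa using h y (Ioo_subset_Icc_self hy)
  exact hprimitive.unique hlinear

theorem sq_integral_mul_lt_of_forall_not_eqOn {u g : ℝ → ℝ} {a b : ℝ} (hab : a < b)
    (hu : ContinuousOn u (Icc a b)) (hg : ContinuousOn g (Icc a b))
    (hu0 : 0 < ∫ x in a..b, u x ^ 2)
    (hne : ∀ k : ℝ, ¬ EqOn g (fun x => k * u x) (Icc a b)) :
    (∫ x in a..b, u x * g x) ^ 2 < (∫ x in a..b, u x ^ 2) * ∫ x in a..b, g x ^ 2 := by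
  set N := ∫ x in a..b, u x ^ 2
  set c := ∫ x in a..b, u x * g x
  -- `k • u` is the orthogonal projection of `g` onto `u`
  set k := c / N
  have hexpand : ∫ x in a..b, (g x - k * u x) ^ 2
      = (∫ x in a..b, g x ^ 2) - 2 * k * c + k ^ 2 * N := by
    have hpoint : (fun x => (g x - k * u x) ^ 2)
        = fun x => g x ^ 2 - 2 * k * (u x * g x) + k ^ 2 * u x ^ 2 := by
      ext x; ring
    have hg2 : IntervalIntegrable (fun x => g x ^ 2) volume a b :=
      (hg.pow 2).intervalIntegrable_of_Icc hab.le
    have hug : IntervalIntegrable (fun x => 2 * k * (u x * g x)) volume a b :=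
      ((hu.mul hg).intervalIntegrable_of_Icc hab.le).const_mul _
    have hu2 : IntervalIntegrable (fun x => k ^ 2 * u x ^ 2) volume a b :=
      ((hu.pow 2).intervalIntegrable_of_Icc hab.le).const_mul _
    rw [hpoint, intervalIntegral.integral_add (hg2.sub hug) hu2,
      intervalIntegral.integral_sub hg2 hug, intervalIntegral.integral_const_mul,
      intervalIntegral.integral_const_mul]
  have hpos : 0 < ∫ x in a..b, (g x - k * u x) ^ 2 := by
    obtain ⟨x, hx, hgx⟩ : ∃ x ∈ Icc a b, g x ≠ k * u x := by
      simpa only [EqOn, not_forall, exists_prop] using hne k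
    exact integral_pos hab ((hg.sub (hu.const_smul k)).pow 2) (fun _ _ => sq_nonneg _)
      ⟨x, hx, pow_two_pos_of_ne_zero (sub_ne_zero.2 hgx)⟩
  have hkN : k * N = c := div_mul_cancel₀ c hu0.ne'
  have hgap : 0 < (∫ x in a..b, g x ^ 2) - k * c := by
    rw [hexpand, show k ^ 2 * N = k * c by rw [← hkN]; ring] at hpos
    linarith
  calc c ^ 2 = N * (k * c) := by rw [← hkN]; ring
    _ < N * ∫ x in a..b, g x ^ 2 := by nlinarith [mul_pos hu0 hgap]

theorem integral_sub_half_sq : ∫ x in (0:ℝ)..1, (x - 1/2) ^ 2 = 1/12 := by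
  rw [intervalIntegral.integral_comp_sub_right (fun x => x ^ 2), integral_pow]
  norm_num

section gradE

variable {f : ℝ → ℝ}

theorem gradE_eq_two_mul_integral_sub (hf : IntegrableOn f (Icc 0 1)) {x : ℝ}
    (hx : x ∈ Icc (0:ℝ) 1) :
    gradE f x = 2 * (∫ y in (0:ℝ)..x, f y) - ∫ y in (0:ℝ)..1, f y := by
  have hI : ∀ {a b : ℝ}, a ∈ Icc (0:ℝ) 1 → b ∈ Icc (0:ℝ) 1 → IntervalIntegrable f volume a b :=
    fun ha hb => (hf.mono_set (uIcc_subset_Icc ha hb)).intervalIntegrable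
  have h01 : (0:ℝ) ∈ Icc (0:ℝ) 1 := left_mem_Icc.2 zero_le_one
  have h11 : (1:ℝ) ∈ Icc (0:ℝ) 1 := right_mem_Icc.2 zero_le_one
  rw [gradE, ← integral_add_adjacent_intervals (hI h01 hx) (hI hx h11)]
  ring

theorem continuousOn_gradE (hf : IntegrableOn f (Icc 0 1)) :
    ContinuousOn (gradE f) (Icc 0 1) := by
  have hF : ContinuousOn (fun x => ∫ y in (0:ℝ)..x, f y) (Icc 0 1) := by
    simpa [uIcc_of_le zero_le_one] using
      continuousOn_primitive_interval (a := 0) (b := 1) (μ := volume)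
        (by simpa [uIcc_of_le zero_le_one] using hf)
  exact ((continuousOn_const.mul hF).sub continuousOn_const).congr
    fun x hx => gradE_eq_two_mul_integral_sub hf hx

theorem ae_eq_const_of_eqOn_gradE {k : ℝ} (hf : IntegrableOn f (Icc 0 1))
    (h : EqOn (gradE f) (fun x => k * (x - 1/2)) (Icc 0 1)) :
    f =ᵐ[volume.restrict (Icc 0 1)] fun _ => k / 2 := by
  have hS := (gradE_eq_two_mul_integral_sub hf (left_mem_Icc.2 zero_le_one)).symm.trans
    (h (left_mem_Icc.2 zero_le_one))
  refine ae_eq_const_of_integral_eq_mul_sub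
    ((intervalIntegrable_iff_integrableOn_Icc_of_le zero_le_one).2 hf)
    fun x hx => ?_
  have hx' := (gradE_eq_two_mul_integral_sub hf hx).symm.trans (h hx)
  rw [integral_same] at hS
  linear_combination hx' / 2 - hS / 2

theorem wfun_eq_zero_of_mca_eq_half (hf : IntervalIntegrable f volume 0 1)
    (hS : ∫ x in (0:ℝ)..1, f x ≠ 0) (hmca : mca f = 1/2) : wfun f = 0 := by
  rw [mca, div_eq_iff hS] at hmca
  have hpoint : (fun x => (x - 1/2) * f x) = fun x => x * f x - 1/2 * f x := by
    ext x; ring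
  have hxf : IntervalIntegrable (fun x => x * f x) volume 0 1 :=
    hf.continuousOn_mul continuousOn_id
  rw [wfun, hpoint, intervalIntegral.integral_sub hxf (hf.const_mul _),
    intervalIntegral.integral_const_mul, hmca]
  ring

theorem payoff_Aop_self (hw : 0 ≤ wfun f) (hg : ContinuousOn (gradE f) (Icc 0 1)) :
    payoff (Aop f) f = (∫ x in (0:ℝ)..1, gradE f x ^ 2)
      - 12 * (∫ x in (0:ℝ)..1, (x - 1/2) * gradE f x) ^ 2 := by
  set c := ∫ x in (0:ℝ)..1, (x - 1/2) * gradE f x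
  have hpoint : (fun x => Aop f x * gradE f x)
      = fun x => gradE f x ^ 2 - 12 * c * ((x - 1/2) * gradE f x) := by
    ext x; simp only [Aop, heav, if_pos hw]; ring
  have hg2 : IntervalIntegrable (fun x => gradE f x ^ 2) volume 0 1 :=
    (hg.pow 2).intervalIntegrable_of_Icc zero_le_one
  have hug : IntervalIntegrable (fun x => (x - 1/2) * gradE f x) volume 0 1 :=
    ((continuousOn_id.sub continuousOn_const).mul hg).intervalIntegrable_of_Icc zero_le_one
  rw [payoff, hpoint, intervalIntegral.integral_sub hg2 (hug.const_mul _),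
    intervalIntegral.integral_const_mul]
  ring

end gradE

/-- For nonconstant `f₀ ∈ L²[0,1]` with `MCA(f₀) = 1/2`, the constrained
selection gradient strictly improves the payoff: `E[A(f₀), f₀] > 0`,
equivalently the Cauchy–Schwarz inequality between `x − 1/2` and `∇E(f₀)`
is strict. -/
theorem stmt14 (f₀ : ℝ → ℝ)
    (hf : MemLp f₀ 2 (volume.restrict (Set.Icc (0:ℝ) 1)))
    (hint : (∫ x in (0:ℝ)..1, f₀ x) ≠ 0)
    (hmca : mca f₀ = 1/2)
    (hnc : ¬ ∃ c : ℝ, f₀ =ᵐ[volume.restrict (Set.Icc (0:ℝ) 1)] (fun _ => c)) :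
    0 < payoff (Aop f₀) f₀ ∧
    (∫ x in (0:ℝ)..1, (x - 1/2) * gradE f₀ x)^2
      < (∫ x in (0:ℝ)..1, (x - 1/2)^2) * ∫ x in (0:ℝ)..1, (gradE f₀ x)^2 := by
  have hfi : IntegrableOn f₀ (Icc 0 1) := hf.integrable one_le_two
  have hg := continuousOn_gradE hfi
  have hCS := sq_integral_mul_lt_of_forall_not_eqOn (u := fun x => x - 1/2) zero_lt_one
    (by fun_prop) hg (by norm_num [integral_sub_half_sq])
    fun k hk => hnc ⟨k / 2, ae_eq_const_of_eqOn_gradE hfi hk⟩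
  have hw := wfun_eq_zero_of_mca_eq_half
    ((intervalIntegrable_iff_integrableOn_Icc_of_le zero_le_one).2 hfi) hint hmca
  rw [integral_sub_half_sq] at hCS
  refine ⟨?_, by rwa [integral_sub_half_sq]⟩
  rw [payoff_Aop_self hw.ge hg]
  linarith
end

section
/- Let L be the (n+1)×(n+1) skew-symmetric matrix with −1 above and 1 below the diagonal. Its characteristic polynomial is det(L − λI) = Σ_{k=0}^{(n+1)/2} C(n+1, 2k) λ^{2k} when n+1 is even, and det(L − λI) = −λ Σ_{k=0}^{n/2} C(n+1, 2k+1) λ^{2k} when n+1 is odd. -/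
/-!
Write `T` for the `m × m` matrix with `x` on the diagonal, `b` above it and `c` below it.
Then `T = A + b • 𝟙𝟙ᵀ` with `A` lower triangular, and when `x ≠ b` the geometric vector
`vᵢ = rⁱ`, `r = (x - c) / (x - b)`, solves `A v = (x - b) • 𝟙`. Hence
`T = A (1 + (b / (x - b)) • v 𝟙ᵀ)`, and the matrix determinant lemma together with a geometric
sum gives `(b - c) det T = b (x - c)ᵐ - c (x - b)ᵐ`; transposing swaps `b` and `c`, which covers
`x = b`. For `L - λ I` this reads `2 det (L - λ I) = (1 - λ)ᵐ + (-(1 + λ))ᵐ`, and the binomial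
theorem keeps the even, respectively odd, powers of `λ`.
-/

open Finset

/-- The skew-symmetric matrix with `−1` above and `1` below the diagonal. -/
def Lmat (n : ℕ) : Matrix (Fin (n+1)) (Fin (n+1)) ℝ :=
  Matrix.of fun i j => if i < j then -1 else if j < i then 1 else 0

open Matrix

section DiagUpperLower

variable {R : Type*} (m : ℕ)

def diagUpperLower (x b c : R) : Matrix (Fin m) (Fin m) R :=
  of fun i j => if i < j then b else if j < i then c else x

lemma transpose_diagUpperLower (x b c : R) :
    (diagUpperLower m x b c)ᵀ = diagUpperLower m x c b := by
  ext i j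
  simp only [transpose_apply, diagUpperLower, of_apply]
  split_ifs <;> first | rfl | omega

variable [CommRing R]

lemma diagUpperLower_eq_add_const (x b c : R) :
    diagUpperLower m x b c = diagUpperLower m (x - b) 0 (c - b) + of fun _ _ => b := by
  ext i j
  simp only [diagUpperLower, Matrix.add_apply, of_apply]
  split_ifs <;> ring

lemma det_diagUpperLower_upper_zero (x c : R) : (diagUpperLower m x 0 c).det = x ^ m := by
  rw [det_of_isLowerTriangular _ fun i j hij => ?_]
  · simp [diagUpperLower]
  · simp [diagUpperLower, show i < j from hij]

lemma diagUpperLower_mulVec_geom (a r : R) :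
    diagUpperLower m a 0 (a * (1 - r)) *ᵥ (fun i => r ^ (i : ℕ)) = fun _ => a := by
  ext i
  have hsplit : (diagUpperLower m a 0 (a * (1 - r)) *ᵥ fun i => r ^ (i : ℕ)) i
      = ∑ k ∈ range (i + 1), (if k < i then a * (1 - r) else a) * r ^ k := by
    simp only [mulVec, dotProduct, diagUpperLower, of_apply, Fin.lt_def]
    rw [Fin.sum_univ_eq_sum_range
      (fun k => (if (i : ℕ) < k then 0 else if k < i then a * (1 - r) else a) * r ^ k),
      ← sum_range_add_sum_Ico _ i.2, sum_eq_zero (s := Ico _ _) fun k hk => by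
        rw [if_pos (by simp at hk; omega), zero_mul], add_zero]
    exact sum_congr rfl fun k hk => by rw [if_neg (by simp at hk; omega)]
  rw [hsplit, sum_range_succ, if_neg (lt_irrefl _), sum_congr rfl fun k hk => by
    rw [if_pos (mem_range.mp hk)], ← mul_sum, mul_assoc, mul_neg_geom_sum]
  ring

end DiagUpperLower

section Field

variable {K : Type*} [Field K] (m : ℕ)

lemma det_diagUpperLower_of_ne {x b : K} (c : K) (h : x ≠ b) :
    (b - c) * (diagUpperLower m x b c).det = b * (x - c) ^ m - c * (x - b) ^ m := by
  set a := x - b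
  have ha : a ≠ 0 := sub_ne_zero.mpr h
  set r := (x - c) / a
  set v : Fin m → K := fun i => r ^ (i : ℕ)
  have hca : c - b = a * (1 - r) := by simp only [r]; field_simp; ring
  have hxc : x - c = a * r := by simp only [r]; field_simp
  have hfactor : diagUpperLower m x b c
      = diagUpperLower m a 0 (c - b) *
          (1 + replicateCol Unit ((b / a) • v) * replicateRow Unit (1 : Fin m → K)) := by
    rw [Matrix.mul_add, Matrix.mul_one, ← Matrix.mul_assoc, ← replicateCol_mulVec, mulVec_smul,
      hca, diagUpperLower_mulVec_geom, ← hca, diagUpperLower_eq_add_const]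
    congr 1
    ext i j
    simp [Matrix.mul_apply, ha]
  have hsum : (1 : Fin m → K) ⬝ᵥ ((b / a) • v) = b / a * ∑ i ∈ range m, r ^ i := by
    simp [v, dotProduct, mul_sum, Fin.sum_univ_eq_sum_range (fun k => b / a * r ^ k) m]
  rw [hfactor, det_mul, det_one_add_replicateCol_mul_replicateRow, det_diagUpperLower_upper_zero,
    hsum, hxc, mul_pow]
  field_simp
  linear_combination (a * b) * geom_sum_mul r m - (b * ∑ i ∈ range m, r ^ i) * hca

lemma det_diagUpperLower (x b c : K) :
    (b - c) * (diagUpperLower m x b c).det = b * (x - c) ^ m - c * (x - b) ^ m := by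
  by_cases hxb : x = b
  · by_cases hxc : x = c
    · subst hxb hxc; simp
    · rw [← det_transpose, transpose_diagUpperLower]
      linear_combination -det_diagUpperLower_of_ne m b hxc
  · exact det_diagUpperLower_of_ne m c hxb

end Field

section Parity

variable {M : Type*} [AddCommMonoid M] (f : ℕ → M)

lemma sum_range_ite_even (m : ℕ) :
    ∑ k ∈ range m, (if Even k then f k else 0) = ∑ j ∈ range ((m + 1) / 2), f (2 * j) := by
  induction m with
  | zero => simp
  | succ m ih =>
    rw [sum_range_succ, ih]
    rcases Nat.even_or_odd m with ⟨t, rfl⟩ | ⟨t, rfl⟩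
    · rw [if_pos ⟨t, rfl⟩, show (t + t + 1 + 1) / 2 = (t + t + 1) / 2 + 1 by omega,
        sum_range_succ, show 2 * ((t + t + 1) / 2) = t + t by omega]
    · rw [if_neg (Nat.not_even_iff_odd.mpr ⟨t, rfl⟩),
        show (2 * t + 1 + 1 + 1) / 2 = (2 * t + 1 + 1) / 2 by omega, add_zero]

lemma sum_range_ite_odd (m : ℕ) :
    ∑ k ∈ range m, (if Odd k then f k else 0) = ∑ j ∈ range (m / 2), f (2 * j + 1) := by
  induction m with
  | zero => simp
  | succ m ih =>
    rw [sum_range_succ, ih]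
    rcases Nat.even_or_odd m with ⟨t, rfl⟩ | ⟨t, rfl⟩
    · rw [if_neg (Nat.not_odd_iff_even.mpr ⟨t, rfl⟩),
        show (t + t + 1) / 2 = (t + t) / 2 by omega, add_zero]
    · rw [if_pos ⟨t, rfl⟩, show (2 * t + 1 + 1) / 2 = (2 * t + 1) / 2 + 1 by omega,
        sum_range_succ, show 2 * ((2 * t + 1) / 2) + 1 = 2 * t + 1 by omega]

end Parity

section Binomial

variable {R : Type*} [CommRing R]

lemma one_add_pow_eq_sum (y : R) (m : ℕ) :
    (1 + y) ^ m = ∑ k ∈ range (m + 1), (m.choose k : R) * y ^ k := by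
  rw [add_comm, add_pow]
  exact sum_congr rfl fun k _ => by rw [one_pow, mul_one, mul_comm]

lemma one_add_pow_add_one_sub_pow (y : R) (m : ℕ) :
    (1 + y) ^ m + (1 - y) ^ m
      = 2 * ∑ j ∈ range (m / 2 + 1), (m.choose (2 * j) : R) * y ^ (2 * j) := by
  rw [sub_eq_add_neg, one_add_pow_eq_sum, one_add_pow_eq_sum, ← sum_add_distrib, mul_sum,
    show m / 2 + 1 = (m + 1 + 1) / 2 by omega,
    ← sum_range_ite_even fun k => 2 * ((m.choose k : R) * y ^ k)]
  refine sum_congr rfl fun k _ => ?_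
  rcases Nat.even_or_odd k with hk | hk
  · rw [if_pos hk, hk.neg_pow]; ring
  · rw [if_neg (Nat.not_even_iff_odd.mpr hk), hk.neg_pow]; ring

lemma one_add_pow_sub_one_sub_pow (y : R) (m : ℕ) :
    (1 + y) ^ m - (1 - y) ^ m
      = 2 * ∑ j ∈ range ((m + 1) / 2), (m.choose (2 * j + 1) : R) * y ^ (2 * j + 1) := by
  rw [sub_eq_add_neg 1, one_add_pow_eq_sum, one_add_pow_eq_sum, ← sum_sub_distrib, mul_sum,
    ← sum_range_ite_odd fun k => 2 * ((m.choose k : R) * y ^ k)]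
  refine sum_congr rfl fun k _ => ?_
  rcases Nat.even_or_odd k with hk | hk
  · rw [if_neg (Nat.not_odd_iff_even.mpr hk), hk.neg_pow]; ring
  · rw [if_pos hk, hk.neg_pow]; ring

end Binomial

lemma Lmat_sub_smul_one (n : ℕ) (lam : ℝ) :
    Lmat n - lam • (1 : Matrix (Fin (n+1)) (Fin (n+1)) ℝ)
      = diagUpperLower (n + 1) (-lam) (-1) 1 := by
  ext i j
  rcases lt_trichotomy i j with h | rfl | h
  · simp [Lmat, diagUpperLower, h, h.ne]
  · simp [Lmat, diagUpperLower]
  · simp [Lmat, diagUpperLower, h, h.ne', h.not_gt]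

lemma two_mul_det_Lmat_sub_smul_one (n : ℕ) (lam : ℝ) :
    2 * (Lmat n - lam • (1 : Matrix (Fin (n+1)) (Fin (n+1)) ℝ)).det
      = (1 - lam) ^ (n + 1) + (-(1 + lam)) ^ (n + 1) := by
  rw [Lmat_sub_smul_one]
  linear_combination -det_diagUpperLower (n + 1) (-lam) (-1) 1

/-- The characteristic polynomial of `L`:
`det(L − λI) = Σ_{k} C(n+1, 2k) λ^{2k}` if `n+1` is even, and
`det(L − λI) = −λ Σ_{k} C(n+1, 2k+1) λ^{2k}` if `n+1` is odd. -/
theorem stmt16 (n : ℕ) (lam : ℝ) :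
    (Even (n + 1) →
      (Lmat n - lam • (1 : Matrix (Fin (n+1)) (Fin (n+1)) ℝ)).det
        = ∑ k ∈ range ((n+1)/2 + 1), ((n+1).choose (2*k) : ℝ) * lam ^ (2*k)) ∧
    (Odd (n + 1) →
      (Lmat n - lam • (1 : Matrix (Fin (n+1)) (Fin (n+1)) ℝ)).det
        = -lam * ∑ k ∈ range (n/2 + 1),
            ((n+1).choose (2*k+1) : ℝ) * lam ^ (2*k)) := by
  have hdet := two_mul_det_Lmat_sub_smul_one n lam
  refine ⟨fun hev => ?_, fun hodd => ?_⟩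
  · rw [hev.neg_pow] at hdet
    linear_combination (hdet + one_add_pow_add_one_sub_pow lam (n + 1)) / 2
  · have hsum := one_add_pow_sub_one_sub_pow lam (n + 1)
    rw [show (n + 1 + 1) / 2 = n / 2 + 1 by obtain ⟨t, ht⟩ := hodd; omega] at hsum
    have hfactor :
        ∑ k ∈ range (n / 2 + 1), ((n + 1).choose (2 * k + 1) : ℝ) * lam ^ (2 * k + 1)
          = lam * ∑ k ∈ range (n / 2 + 1), ((n + 1).choose (2 * k + 1) : ℝ) * lam ^ (2 * k) := by
      rw [mul_sum]
      exact sum_congr rfl fun k _ => by ring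
    rw [hodd.neg_pow] at hdet
    linear_combination (hdet - hsum) / 2 - hfactor
end
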